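/- The set I′ = ⋃_{s ∈ B} [τ(s), τ(s + ⟨1⟩)] is dense in the interval [0,1]. -/

import Mathlib

/-!
For `s ∈ B` the interval `[τ s, τ (s + ⟨1⟩)]` has length `λ (ℓ s)`: the elements of `B` that are
`≺ s + ⟨1⟩` are those `≺ s` together with `s` itself. If `s ≺ t` then every element `≺ s + ⟨1⟩`
is `≺ t`, so `τ (s + ⟨1⟩) ≤ τ t` and the intervals have disjoint interiors. As `B_n` has `n!`
elements, their total length is `∑ₙ n! λ n = ∑ₙ 2⁻ⁿ = 1`, so they cover `[0,1]` up to a null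
set, and a subset of `[0,1]` of full measure is dense in it.
-/

/-- The `j`-th entry (1-indexed) of a finite sequence of positive naturals,
viewed as a natural number. Only used for `1 ≤ j ≤ s.length`. -/
def nthSeq (s : List ℕ+) (j : ℕ) : ℕ := ↑(s.getD (j - 1) 1)

/-- The linear order `⪯` on finite sequences of positive natural numbers:
`s ⪯ t` iff either (a) there is an index `j ≤ min (ℓ s) (ℓ t)` which is the first index where
`s` and `t` differ, and there `s j < t j`, or (b) `ℓ s ≤ ℓ t` and `t` extends `s`. -/
def sle (s t : List ℕ+) : Prop :=
  (∃ j, 1 ≤ j ∧ j ≤ min s.length t.length ∧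
     (∀ i, 1 ≤ i → i < j → nthSeq s i = nthSeq t i) ∧ nthSeq s j < nthSeq t j) ∨
  (s.length ≤ t.length ∧ ∀ j, 1 ≤ j → j ≤ s.length → nthSeq s j = nthSeq t j)

/-- The strict version `≺` of the order `⪯`. -/
def slt (s t : List ℕ+) : Prop := sle s t ∧ s ≠ t

/-- The set `B` of nonempty sequences `s` with `s i ≤ i` for all `1 ≤ i ≤ ℓ s`. -/
def BSet : Set (List ℕ+) := {s | 1 ≤ s.length ∧ ∀ i, 1 ≤ i → i ≤ s.length → nthSeq s i ≤ i}

/-- `λ n = 1 / (2^n n!)`. -/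
noncomputable def lam (n : ℕ) : ℝ := 1 / ((2 : ℝ) ^ n * (n.factorial : ℝ))

/-- `τ s = Σ_{t ∈ B, t ≺ s} λ (ℓ t)`. -/
noncomputable def tau (s : List ℕ+) : ℝ :=
  ∑' t : {t : List ℕ+ // t ∈ BSet ∧ slt t s}, lam t.1.length

open MeasureTheory Set Function

section Measure

variable {X : Type*} [MeasurableSpace X]

lemma interior_subset_closure_of_measure_diff_eq_zero [TopologicalSpace X] (μ : Measure X)
    [μ.IsOpenPosMeasure] {s u : Set X} (h : μ (s \ u) = 0) : interior s ⊆ closure u := by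
  intro x hx
  by_contra hxu
  have hpos := (isOpen_interior.sdiff isClosed_closure).measure_pos μ ⟨x, hx, hxu⟩
  exact hpos.ne' (measure_mono_null (sdiff_subset_sdiff interior_subset subset_closure) h)

lemma measure_diff_iUnion_eq_zero_of_le_tsum {ι : Type*} [Countable ι] {μ : Measure X}
    {s : Set X} (hs : μ s ≠ ⊤) {J : ι → Set X} (hJs : ∀ i, J i ⊆ s)
    (hJ : ∀ i, MeasurableSet (J i)) (hdisj : Pairwise (Disjoint on J))
    (hle : μ s ≤ ∑' i, μ (J i)) : μ (s \ ⋃ i, J i) = 0 := by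
  have hsub : (⋃ i, J i) ⊆ s := iUnion_subset hJs
  rw [measure_sdiff hsub (MeasurableSet.iUnion hJ).nullMeasurableSet
    (ne_top_of_le_ne_top hs (measure_mono hsub)), measure_iUnion hdisj hJ]
  exact tsub_eq_zero_of_le hle

end Measure

lemma one_le_nthSeq (s : List ℕ+) (j : ℕ) : 1 ≤ nthSeq s j := (s.getD (j - 1) 1).pos

lemma nthSeq_succ_eq_getElem (s : List ℕ+) {n : ℕ} (h : n < s.length) :
    nthSeq s (n + 1) = s[n] := by
  simp [nthSeq, h]

lemma nthSeq_append_of_le (s r : List ℕ+) {j : ℕ} (h1 : 1 ≤ j) (h2 : j ≤ s.length) :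
    nthSeq (s ++ r) j = nthSeq s j := by
  unfold nthSeq; rw [List.getD_append]; omega

lemma nthSeq_append_singleton (s : List ℕ+) (k : ℕ+) :
    nthSeq (s ++ [k]) (s.length + 1) = k := by
  simp [nthSeq]

lemma eq_of_nthSeq_eq {s t : List ℕ+} (hl : s.length = t.length)
    (h : ∀ j, 1 ≤ j → j ≤ s.length → nthSeq s j = nthSeq t j) : s = t := by
  refine List.ext_getElem hl fun n hs ht => PNat.coe_injective ?_
  rw [← nthSeq_succ_eq_getElem s hs, ← nthSeq_succ_eq_getElem t ht]
  exact h (n + 1) (by omega) (by omega)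

lemma sle_refl (s : List ℕ+) : sle s s := Or.inr ⟨le_rfl, fun _ _ _ => rfl⟩

lemma sle_antisymm {s t : List ℕ+} (hst : sle s t) (hts : sle t s) : s = t := by
  rcases hst with ⟨j, hj1, hj2, hagree, hlt⟩ | ⟨hlen, hagree⟩
  · rcases hts with ⟨j', hj1', -, hagree', hlt'⟩ | ⟨-, hagree'⟩
    · rcases lt_trichotomy j j' with h | rfl | h
      · exact absurd (hagree' j hj1 h).symm hlt.ne
      · omega
      · exact absurd (hagree j' hj1' h) hlt'.ne'
    · exact absurd (hagree' j hj1 (hj2.trans (min_le_right _ _))).symm hlt.ne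
  · rcases hts with ⟨j', hj1', hj2', -, hlt'⟩ | ⟨hlen', -⟩
    · exact absurd (hagree j' hj1' (hj2'.trans (min_le_right _ _))) hlt'.ne'
    · exact eq_of_nthSeq_eq (le_antisymm hlen hlen') hagree

lemma sle_total (s t : List ℕ+) : sle s t ∨ sle t s := by
  classical
  by_cases hex : ∃ j, (1 ≤ j ∧ j ≤ min s.length t.length) ∧ nthSeq s j ≠ nthSeq t j
  · obtain ⟨⟨hj1, hj2⟩, hne⟩ := Nat.find_spec hex
    have hagree : ∀ i, 1 ≤ i → i < Nat.find hex → nthSeq s i = nthSeq t i := fun i hi1 hi => by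
      by_contra hne'
      exact Nat.find_min hex hi ⟨⟨hi1, by omega⟩, hne'⟩
    rcases lt_or_gt_of_ne hne with h | h
    · exact Or.inl (Or.inl ⟨_, hj1, hj2, hagree, h⟩)
    · exact Or.inr (Or.inl ⟨_, hj1, by omega, fun i hi1 hi => (hagree i hi1 hi).symm, h⟩)
  · push Not at hex
    rcases le_total s.length t.length with h | h
    · exact Or.inl (Or.inr ⟨h, fun j hj1 hj2 => hex j ⟨hj1, by omega⟩⟩)
    · exact Or.inr (Or.inr ⟨h, fun j hj1 hj2 => (hex j ⟨hj1, by omega⟩).symm⟩)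

lemma sle_trans {s t u : List ℕ+} (hst : sle s t) (htu : sle t u) : sle s u := by
  rcases hst with ⟨j, hj1, hj2, ha, hlt⟩ | ⟨hlen, ha⟩
  · rcases htu with ⟨j', hj1', hj2', ha', hlt'⟩ | ⟨hlen', ha'⟩
    · rcases lt_trichotomy j j' with h | rfl | h
      · refine Or.inl ⟨j, hj1, by omega,
          fun i hi1 hi => (ha i hi1 hi).trans (ha' i hi1 (by omega)), ?_⟩
        rwa [← ha' j hj1 h]
      · exact Or.inl ⟨j, hj1, by omega, fun i hi1 hi => (ha i hi1 hi).trans (ha' i hi1 hi),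
          hlt.trans hlt'⟩
      · refine Or.inl ⟨j', hj1', by omega,
          fun i hi1 hi => (ha i hi1 (by omega)).trans (ha' i hi1 hi), ?_⟩
        rwa [ha j' hj1' h]
    · refine Or.inl ⟨j, hj1, by omega,
        fun i hi1 hi => (ha i hi1 hi).trans (ha' i hi1 (by omega)), ?_⟩
      rwa [← ha' j hj1 (by omega)]
  · rcases htu with ⟨j', hj1', hj2', ha', hlt'⟩ | ⟨hlen', ha'⟩
    · by_cases hc : j' ≤ s.length
      · refine Or.inl ⟨j', hj1', by omega,
          fun i hi1 hi => (ha i hi1 (by omega)).trans (ha' i hi1 hi), ?_⟩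
        rwa [ha j' hj1' hc]
      · exact Or.inr ⟨by omega, fun i hi1 hi => (ha i hi1 hi).trans (ha' i hi1 (by omega))⟩
    · exact Or.inr ⟨by omega, fun i hi1 hi => (ha i hi1 hi).trans (ha' i hi1 (by omega))⟩

lemma sle_append_one (s : List ℕ+) : sle s (s ++ [1]) :=
  Or.inr ⟨by simp, fun _ hj1 hj2 => (nthSeq_append_of_le s [1] hj1 hj2).symm⟩

lemma slt_append_one_iff {s t : List ℕ+} : slt t (s ++ [1]) ↔ sle t s := by
  refine ⟨fun ⟨h, hne⟩ => ?_, fun h => ⟨sle_trans h (sle_append_one s), fun heq => ?_⟩⟩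
  · rcases h with ⟨j, hj1, hj2, ha, hlt⟩ | ⟨hlen, ha⟩
    · simp only [List.length_append, List.length_singleton] at hj2
      by_cases hc : j ≤ s.length
      · refine Or.inl ⟨j, hj1, by omega, fun i hi1 hi => ?_, ?_⟩
        · rw [ha i hi1 hi, nthSeq_append_of_le s [1] hi1 (by omega)]
        · rwa [nthSeq_append_of_le s [1] hj1 hc] at hlt
      · -- the first difference would be at the appended entry `1`, which nothing undercuts
        rw [show j = s.length + 1 by omega, nthSeq_append_singleton, PNat.one_coe] at hlt
        exact absurd hlt (one_le_nthSeq t _).not_gt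
    · simp only [List.length_append, List.length_singleton] at hlen
      by_cases hc : t.length ≤ s.length
      · exact Or.inr ⟨hc, fun i hi1 hi => by
          rw [ha i hi1 hi, nthSeq_append_of_le s [1] hi1 (by omega)]⟩
      · exact absurd (eq_of_nthSeq_eq (by simp; omega) ha) hne
  · subst heq
    have := congrArg List.length (sle_antisymm (sle_append_one s) h)
    simp at this

/-- `⟨n, c⟩` encodes the sequence `(c 0 + 1, …, c n + 1) ∈ B_{n+1}`. -/
abbrev BCode := Σ n : ℕ, ∀ j : Fin (n + 1), Fin (j + 1)

lemma card_pi_fin_succ (n : ℕ) : Fintype.card (∀ j : Fin n, Fin (j + 1)) = n.factorial := by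
  simp [Fintype.card_pi, Fin.prod_univ_eq_prod_range (· + 1), Finset.prod_range_add_one_eq_factorial]

lemma lam_nonneg (n : ℕ) : 0 ≤ lam n := by
  unfold lam; positivity

lemma hasSum_lam_BCode : HasSum (fun p : BCode => lam (p.1 + 1)) 1 := by
  have hfiber (n : ℕ) :
      HasSum (fun _ : ∀ j : Fin (n + 1), Fin (j + 1) => lam (n + 1)) (1 / 2 / 2 ^ n) := by
    convert hasSum_fintype _
    rw [Finset.sum_const, Finset.card_univ, card_pi_fin_succ, nsmul_eq_mul, lam]
    field_simp
    ring
  refine (hasSum_geometric_two' 1).sigma_of_hasSum hfiber ?_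
  rw [summable_sigma_of_nonneg fun _ => lam_nonneg _]
  exact ⟨fun _ => .of_finite,
    (hasSum_geometric_two' 1).summable.congr fun n => (hfiber n).tsum_eq.symm⟩

def ofCode (p : BCode) : List ℕ+ := List.ofFn fun j => Nat.succPNat (p.2 j)

lemma length_ofCode (p : BCode) : (ofCode p).length = p.1 + 1 := List.length_ofFn

lemma nthSeq_ofCode (p : BCode) (j : Fin (p.1 + 1)) : nthSeq (ofCode p) (j + 1) = p.2 j + 1 := by
  rw [nthSeq_succ_eq_getElem _ (by rw [length_ofCode]; exact j.isLt)]
  simp only [ofCode, List.getElem_ofFn, Nat.succPNat_coe]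

lemma ofCode_mem_BSet (p : BCode) : ofCode p ∈ BSet := by
  refine ⟨by simp [length_ofCode], fun i hi1 hi2 => ?_⟩
  obtain ⟨j, rfl⟩ : ∃ j, i = j + 1 := ⟨i - 1, by omega⟩
  rw [length_ofCode] at hi2
  rw [nthSeq_ofCode p ⟨j, by omega⟩]
  exact Nat.succ_le_succ (Nat.lt_succ_iff.mp (p.2 ⟨j, by omega⟩).isLt)

lemma ofCode_injective : Injective ofCode := by
  rintro ⟨n, v⟩ ⟨m, w⟩ h
  obtain rfl : n = m := by simpa [length_ofCode] using congrArg List.length h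
  congr
  funext j
  have := nthSeq_ofCode ⟨n, v⟩ j
  rw [h, nthSeq_ofCode] at this
  exact Fin.ext (by simpa using this.symm)

lemma exists_ofCode_eq {t : List ℕ+} (ht : t ∈ BSet) : ∃ p, ofCode p = t := by
  obtain ⟨hlen, hle⟩ := ht
  refine ⟨⟨t.length - 1, fun j => ⟨nthSeq t (j + 1) - 1, ?_⟩⟩, ?_⟩
  · have := hle (j + 1) (by omega) (by omega)
    omega
  · refine eq_of_nthSeq_eq (by simp only [length_ofCode]; omega) fun i hi1 hi2 => ?_
    obtain ⟨j, rfl⟩ : ∃ j, i = j + 1 := ⟨i - 1, by omega⟩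
    simp only [length_ofCode] at hi2
    rw [nthSeq_ofCode _ ⟨j, show j < t.length - 1 + 1 by omega⟩]
    have := one_le_nthSeq t (j + 1)
    simp only
    omega

noncomputable def codeEquivBSet : BCode ≃ BSet :=
  Equiv.ofBijective (fun p => ⟨ofCode p, ofCode_mem_BSet p⟩)
    ⟨fun _ _ h => ofCode_injective (congrArg Subtype.val h),
     fun t => (exists_ofCode_eq t.2).imp fun _ hp => Subtype.ext hp⟩

lemma hasSum_lam_BSet : HasSum (fun t : BSet => lam t.1.length) 1 := by
  rw [← codeEquivBSet.hasSum_iff]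
  convert hasSum_lam_BCode using 2 with p
  exact congrArg lam (length_ofCode p)

def below (s : List ℕ+) : Set (List ℕ+) := {t | t ∈ BSet ∧ slt t s}

lemma below_subset_BSet (s : List ℕ+) : below s ⊆ BSet := fun _ ht => ht.1

lemma below_append_one {s : List ℕ+} (hs : s ∈ BSet) : below (s ++ [1]) = below s ∪ {s} := by
  ext t
  simp only [below, mem_ofPred_eq, mem_union, mem_singleton_iff, slt_append_one_iff]
  constructor
  · rintro ⟨htB, hts⟩
    by_cases rfl : t = s
    · exact Or.inr rfl
    · exact Or.inl ⟨htB, hts, ‹t ≠ s›⟩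
  · rintro (⟨htB, hts, -⟩ | rfl)
    · exact ⟨htB, hts⟩
    · exact ⟨hs, sle_refl t⟩

lemma below_append_one_subset {s t : List ℕ+} (hst : slt s t) : below (s ++ [1]) ⊆ below t := by
  rintro u ⟨huB, hus⟩
  rw [slt_append_one_iff] at hus
  refine ⟨huB, sle_trans hus hst.1, ?_⟩
  rintro rfl
  exact hst.2 (sle_antisymm hst.1 hus)

lemma summable_lam_of_subset_BSet {A : Set (List ℕ+)} (hA : A ⊆ BSet) :
    Summable fun t : A => lam t.1.length :=
  (hasSum_lam_BSet.summable.comp_injective (inclusion_injective hA) :)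

lemma tsum_lam_mono {A C : Set (List ℕ+)} (hC : C ⊆ BSet) (hAC : A ⊆ C) :
    ∑' t : A, lam t.1.length ≤ ∑' t : C, lam t.1.length :=
  (summable_lam_of_subset_BSet (hAC.trans hC)).tsum_le_tsum_of_inj (inclusion hAC)
    (inclusion_injective hAC) (fun _ _ => lam_nonneg _) (fun _ => le_rfl)
    (summable_lam_of_subset_BSet hC)

lemma tau_eq_tsum_below (s : List ℕ+) : tau s = ∑' t : below s, lam t.1.length := rfl

lemma tau_nonneg (s : List ℕ+) : 0 ≤ tau s := tsum_nonneg fun _ => lam_nonneg _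

lemma tau_le_one (s : List ℕ+) : tau s ≤ 1 :=
  hasSum_lam_BSet.tsum_eq ▸ tsum_lam_mono subset_rfl (below_subset_BSet s)

lemma tau_append_one {s : List ℕ+} (hs : s ∈ BSet) : tau (s ++ [1]) = tau s + lam s.length := by
  have hdisj : Disjoint (below s) {s} := disjoint_singleton_right.mpr fun h => h.2.2 rfl
  rw [tau_eq_tsum_below, tau_eq_tsum_below, below_append_one hs,
    Summable.tsum_union_disjoint (f := fun t : List ℕ+ => lam t.length) hdisj
      (summable_lam_of_subset_BSet (below_subset_BSet s))
      (summable_lam_of_subset_BSet (singleton_subset_iff.mpr hs)),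
    tsum_singleton s fun t : List ℕ+ => lam t.length]

lemma tau_append_one_le {s t : List ℕ+} (hst : slt s t) : tau (s ++ [1]) ≤ tau t :=
  tsum_lam_mono (below_subset_BSet t) (below_append_one_subset hst)

lemma pairwise_disjoint_Ioo_tau :
    Pairwise (Disjoint on fun s : BSet => Ioo (tau s) (tau (s.1 ++ [1]))) := by
  have key {s t : List ℕ+} (hst : slt s t) :
      Disjoint (Ioo (tau s) (tau (s ++ [1]))) (Ioo (tau t) (tau (t ++ [1]))) :=
    disjoint_left.mpr fun _ hs ht => lt_asymm (hs.2.trans_le (tau_append_one_le hst)) ht.1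
  intro s t hne
  have hne' : s.1 ≠ t.1 := Subtype.coe_injective.ne hne
  rcases sle_total s.1 t.1 with h | h
  · exact key ⟨h, hne'⟩
  · exact (key ⟨h, hne'.symm⟩).symm

lemma volume_Icc_diff_Iprime :
    volume (Icc (0 : ℝ) 1 \ ⋃ s ∈ BSet, Icc (tau s) (tau (s ++ [1]))) = 0 := by
  refine measure_mono_null (sdiff_subset_sdiff_right ?_) (measure_diff_iUnion_eq_zero_of_le_tsum
    (J := fun s : BSet => Ioo (tau s) (tau (s.1 ++ [1]))) (by simp)
    (fun s => Ioo_subset_Icc_self.trans (Icc_subset_Icc (tau_nonneg _) (tau_le_one _)))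
    (fun _ => measurableSet_Ioo) pairwise_disjoint_Ioo_tau ?_)
  · exact iUnion_subset fun s => Ioo_subset_Icc_self.trans
      (subset_biUnion_of_mem (u := fun s => Icc (tau s) (tau (s ++ [1]))) s.2)
  · have hlen (s : BSet) :
        volume (Ioo (tau s) (tau (s.1 ++ [1]))) = ENNReal.ofReal (lam s.1.length) := by
      rw [Real.volume_Ioo, tau_append_one s.2, add_sub_cancel_left]
    simp_rw [hlen, ← ENNReal.ofReal_tsum_of_nonneg (fun _ => lam_nonneg _) hasSum_lam_BSet.summable,
      hasSum_lam_BSet.tsum_eq, Real.volume_Icc, sub_zero, le_rfl]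

/-- The set `I' = ⋃_{s ∈ B} [τ s, τ (s + ⟨1⟩)]` is dense in the unit interval `[0,1]`. -/
theorem Iprime_dense :
    ∀ x ∈ Set.Icc (0 : ℝ) 1,
      x ∈ closure (⋃ s ∈ BSet, Set.Icc (tau s) (tau (s ++ [1]))) := by
  have h := interior_subset_closure_of_measure_diff_eq_zero volume volume_Icc_diff_Iprime
  rw [interior_Icc] at h
  exact fun x hx => closure_minimal h isClosed_closure (by rwa [closure_Ioo zero_ne_one])
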